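/- Let (X, ρ) be a metric space and F_L the class of L-Lipschitz functions f : X → [0,1]. For any t > 0, the dual t-fat-shattering dimension of F_L is at most log₂(M(X, 2t/L)), where M(X, ε) denotes the ε-packing number of X. -/
import Mathlib


open scoped ENNReal

/-- The class of L-Lipschitz functions `X → [0,1]`. -/
def LipClass (X : Type*) [MetricSpace X] (L : ℝ) : Set (X → ℝ) :=
  {f | (∀ x, f x ∈ Set.Icc (0 : ℝ) 1) ∧ ∀ x y, |f x - f y| ≤ L * dist x y}

/-- A set of `n` (distinct) functions of `F` is `t`-shattered by the dual class
`F*` (whose elements are evaluation points of `X`). -/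
def DualShattered {X : Type*} (F : Set (X → ℝ)) (t : ℝ) (n : ℕ) : Prop :=
  ∃ f : Fin n → X → ℝ, (∀ i, f i ∈ F) ∧ Function.Injective f ∧
    ∃ r : Fin n → ℝ, ∀ b : Fin n → Bool, ∃ x : X,
      ∀ i, (b i = true → r i + t ≤ f i x) ∧ (b i = false → f i x ≤ r i - t)

/-- An ε-packing: a finite set of points with pairwise distances at least ε. -/
def IsPacking {X : Type*} [MetricSpace X] (s : Finset X) (ε : ℝ) : Prop :=
  ∀ x ∈ s, ∀ y ∈ s, x ≠ y → ε ≤ dist x y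

/-- The ε-packing number of X: the supremum of cardinalities of ε-packings. -/
noncomputable def packingNumber (X : Type*) [MetricSpace X] (ε : ℝ) : ℕ∞ :=
  ⨆ s : {s : Finset X // IsPacking s ε}, (s.1.card : ℕ∞)

/-- the dual t-fat-shattering dimension of the class of L-Lipschitz
functions into [0,1] is at most log₂ M(X, 2t/L); equivalently, any dual
t-shattered set of size n forces 2^n ≤ M(X, 2t/L). -/
theorem stmt5 {X : Type*} [MetricSpace X] (L t : ℝ) (hL : 0 < L) (ht : 0 < t)
    (n : ℕ) (h : DualShattered (LipClass X L) t n) :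
    ((2 ^ n : ℕ) : ℕ∞) ≤ packingNumber X (2 * t / L) := by
  classical
  obtain ⟨f, hf, -, r, hr⟩ := h
  choose x hx using hr
  have key : ∀ b b' : Fin n → Bool, b ≠ b' → 2 * t / L ≤ dist (x b) (x b') := by
    intro b b' hbb
    obtain ⟨i, hi⟩ := Function.ne_iff.mp hbb
    have hlip := (hf i).2 (x b) (x b')
    have h2t : 2 * t ≤ |f i (x b) - f i (x b')| := by
      rcases Bool.eq_false_or_eq_true (b' i) with hb' | hb' <;>
        rcases Bool.eq_false_or_eq_true (b i) with hb | hb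
      · exact absurd (hb.trans hb'.symm) hi
      · have h1 := (hx b i).2 hb
        have h2 := (hx b' i).1 hb'
        rw [abs_sub_comm]
        calc 2 * t ≤ (r i + t) - (r i - t) := by ring_nf; exact le_refl _
          _ ≤ f i (x b') - f i (x b) := by linarith
          _ ≤ |f i (x b') - f i (x b)| := le_abs_self _
      · have h1 := (hx b i).1 hb
        have h2 := (hx b' i).2 hb'
        calc 2 * t ≤ f i (x b) - f i (x b') := by linarith
          _ ≤ |f i (x b) - f i (x b')| := le_abs_self _
      · exact absurd (hb.trans hb'.symm) hi
    rw [div_le_iff₀ hL, mul_comm]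
    linarith
  have hxinj : Function.Injective x := by
    intro b b' hbb
    by_contra hne
    have := key b b' hne
    rw [hbb, dist_self] at this
    have : 0 < 2 * t / L := by positivity
    linarith
  set s : Finset X := Finset.univ.image x with hs
  have hpack : IsPacking s (2 * t / L) := by
    intro a ha c hc hac
    simp only [hs, Finset.mem_image, Finset.mem_univ, true_and] at ha hc
    obtain ⟨b, rfl⟩ := ha
    obtain ⟨b', rfl⟩ := hc
    exact key b b' (fun h => hac (congrArg x h))
  have hcard : s.card = 2 ^ n := by
    rw [hs, Finset.card_image_of_injective _ hxinj, Finset.card_univ]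
    simp [Fintype.card_fun]
  calc ((2 ^ n : ℕ) : ℕ∞) = (s.card : ℕ∞) := by rw [hcard]
    _ ≤ packingNumber X (2 * t / L) := le_iSup (fun s : {s : Finset X // IsPacking s (2 * t / L)} => (s.1.card : ℕ∞)) ⟨s, hpack⟩
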